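/- arXiv:1410.3079 — 3 statements merged into one kernel-verified Lean document; each statement's English description precedes it below -/
import Mathlib

section
/- Let φ : A → B be a non-expansive homomorphism of seminormed commutative rings. Then: (i) the Kähler seminorm ‖·‖_Ω is a B-module seminorm on Ω_{B/A} for which the universal derivation d : B → Ω_{B/A} is non-expansive, and every B-module seminorm on Ω_{B/A} making d non-expansive is pointwise dominated by ‖·‖_Ω; (ii) for every seminormed B-module M, composition with d gives a bijection between non-expansive B-linear maps Ω_{B/A} → M and non-expansive A-derivations B → M. -/
open scoped NNReal TensorProduct

universe u

/-- A (nonarchimedean) seminorm on an additive group. -/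
def IsGroupSeminorm {M : Type*} [AddCommGroup M] (f : M → ℝ≥0) : Prop :=
  f 0 = 0 ∧ ∀ x y : M, f (x - y) ≤ max (f x) (f y)

/-- A seminorm on a commutative ring. -/
def IsRingSeminorm {A : Type*} [CommRing A] (f : A → ℝ≥0) : Prop :=
  IsGroupSeminorm f ∧ f 1 = 1 ∧ ∀ x y : A, f (x * y) ≤ f x * f y

/-- A seminorm on a module over a seminormed ring. -/
def IsModuleSeminorm {A M : Type*} [CommRing A] [AddCommGroup M] [Module A M]
    (fA : A → ℝ≥0) (fM : M → ℝ≥0) : Prop :=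
  IsGroupSeminorm fM ∧ ∀ (a : A) (m : M), fM (a • m) ≤ fA a * fM m

/-- The Kähler seminorm on `Ω[B⁄A]` induced by a seminorm `vB` on `B`. -/
noncomputable def kahlerSeminorm (A B : Type*) [CommRing A] [CommRing B] [Algebra A B]
    (vB : B → ℝ≥0) (x : Ω[B⁄A]) : ℝ≥0 :=
  sInf { r | ∃ (n : ℕ) (c b : Fin n → B),
    x = ∑ i, c i • KaehlerDifferential.D A B (b i) ∧
    r = Finset.univ.sup fun i => vB (c i) * vB (b i) }

/-!
Every `B`-module seminorm `w` with `w ∘ d ≤ |·|` satisfies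
`w (∑ cᵢ • d bᵢ) ≤ maxᵢ |cᵢ| w (d bᵢ) ≤ maxᵢ |cᵢ| |bᵢ|`, so `w ≤ ‖·‖_Ω`. Applied to `‖g ·‖_M`,
where `g : Ω_{B/A} → M` is the linear map induced by a non-expansive derivation, this makes `g`
non-expansive; `g` is unique because `d B` spans `Ω_{B/A}`. The ultrametric inequality for
`‖·‖_Ω` comes from concatenating near-optimal representations.
-/

namespace IsGroupSeminorm

variable {M : Type*} [AddCommGroup M] {f : M → ℝ≥0}

lemma map_neg_le (hf : IsGroupSeminorm f) (x : M) : f (-x) ≤ f x := by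
  simpa [hf.1] using hf.2 0 x

lemma map_add_le (hf : IsGroupSeminorm f) (x y : M) : f (x + y) ≤ max (f x) (f y) := by
  simpa using (hf.2 x (-y)).trans (max_le_max le_rfl (hf.map_neg_le y))

lemma map_sum_le (hf : IsGroupSeminorm f) {ι : Type*} (s : Finset ι) (g : ι → M) :
    f (∑ i ∈ s, g i) ≤ s.sup fun i => f (g i) := by
  classical
  induction s using Finset.induction_on with
  | empty => simp [hf.1]
  | insert a s ha ih =>
    rw [Finset.sum_insert ha, Finset.sup_insert]
    exact (hf.map_add_le _ _).trans (max_le_max le_rfl ih)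

end IsGroupSeminorm

lemma IsModuleSeminorm.comp_linearMap {R M N : Type*} [CommRing R] [AddCommGroup M] [Module R M]
    [AddCommGroup N] [Module R N] {vR : R → ℝ≥0} {vN : N → ℝ≥0} (h : IsModuleSeminorm vR vN)
    (g : M →ₗ[R] N) : IsModuleSeminorm vR (vN ∘ g) :=
  ⟨⟨by simpa using h.1.1, fun x y => by simpa using h.1.2 (g x) (g y)⟩,
    fun a m => by simpa using h.2 a (g m)⟩

open KaehlerDifferential

section kahlerSeminorm

variable {A B : Type*} [CommRing A] [CommRing B] [Algebra A B] {vB : B → ℝ≥0}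

theorem KaehlerDifferential.exists_eq_sum_smul_D (x : Ω[B⁄A]) :
    ∃ (n : ℕ) (c b : Fin n → B), x = ∑ i, c i • D A B (b i) := by
  have hx : x ∈ Submodule.span B (Set.range (D A B)) := by
    rw [span_range_derivation]; trivial
  obtain ⟨n, c, g, rfl⟩ := Submodule.mem_span_set'.mp hx
  choose b hb using fun i => (g i).2
  exact ⟨n, c, b, by simp only [hb]⟩

theorem kahlerSeminorm_le_of_eq_sum {x : Ω[B⁄A]} {n : ℕ} {c b : Fin n → B}
    (hx : x = ∑ i, c i • D A B (b i)) :
    kahlerSeminorm A B vB x ≤ Finset.univ.sup fun i => vB (c i) * vB (b i) :=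
  csInf_le (OrderBot.bddBelow _) ⟨n, c, b, hx, rfl⟩

theorem le_mul_kahlerSeminorm {x : Ω[B⁄A]} {t C : ℝ≥0}
    (h : ∀ (n : ℕ) (c b : Fin n → B), x = ∑ i, c i • D A B (b i) →
      t ≤ C * Finset.univ.sup fun i => vB (c i) * vB (b i)) :
    t ≤ C * kahlerSeminorm A B vB x := by
  obtain ⟨n, c, b, hx⟩ := exists_eq_sum_smul_D x
  rw [kahlerSeminorm, sInf_eq_iInf', NNReal.mul_iInf]
  exact @le_ciInf _ _ _ ⟨⟨_, n, c, b, hx, rfl⟩⟩ _ _ fun ⟨_, n, c, b, hx, hr⟩ => hr ▸ h n c b hx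

theorem le_kahlerSeminorm {x : Ω[B⁄A]} {t : ℝ≥0}
    (h : ∀ (n : ℕ) (c b : Fin n → B), x = ∑ i, c i • D A B (b i) →
      t ≤ Finset.univ.sup fun i => vB (c i) * vB (b i)) :
    t ≤ kahlerSeminorm A B vB x := by
  simpa using le_mul_kahlerSeminorm (C := 1) (by simpa using h)

theorem exists_eq_sum_lt_of_kahlerSeminorm_lt {x : Ω[B⁄A]} {t : ℝ≥0}
    (h : kahlerSeminorm A B vB x < t) :
    ∃ (n : ℕ) (c b : Fin n → B), x = ∑ i, c i • D A B (b i) ∧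
      (Finset.univ.sup fun i => vB (c i) * vB (b i)) < t := by
  contrapose! h
  exact le_kahlerSeminorm h

theorem kahlerSeminorm_zero : kahlerSeminorm A B vB 0 = 0 :=
  nonpos_iff_eq_zero.mp <| by
    simpa using kahlerSeminorm_le_of_eq_sum (vB := vB) (c := Fin.elim0) (b := Fin.elim0) (by simp)

theorem kahlerSeminorm_add_le (x y : Ω[B⁄A]) :
    kahlerSeminorm A B vB (x + y) ≤ max (kahlerSeminorm A B vB x) (kahlerSeminorm A B vB y) := by
  refine le_of_forall_gt_imp_ge_of_dense fun t ht => ?_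
  rw [max_lt_iff] at ht
  obtain ⟨n, c, b, rfl, hxt⟩ := exists_eq_sum_lt_of_kahlerSeminorm_lt ht.1
  obtain ⟨m, c', b', rfl, hyt⟩ := exists_eq_sum_lt_of_kahlerSeminorm_lt ht.2
  have hsum : (∑ i, c i • D A B (b i)) + ∑ j, c' j • D A B (b' j) =
      ∑ k, Fin.append c c' k • D A B (Fin.append b b' k) := by
    simp [Fin.sum_univ_add]
  refine (kahlerSeminorm_le_of_eq_sum hsum).trans (Finset.sup_le fun k _ => ?_)
  cases k using Fin.addCases with
  | left i => simpa using Finset.sup_le_iff.mp hxt.le i (Finset.mem_univ i)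
  | right j => simpa using Finset.sup_le_iff.mp hyt.le j (Finset.mem_univ j)

theorem kahlerSeminorm_neg_le (hB : IsGroupSeminorm vB) (x : Ω[B⁄A]) :
    kahlerSeminorm A B vB (-x) ≤ kahlerSeminorm A B vB x :=
  le_kahlerSeminorm fun n c b hx =>
    (kahlerSeminorm_le_of_eq_sum (c := -c) (b := b) (by simp [hx])).trans
      (Finset.sup_mono_fun fun i _ => mul_le_mul_left (hB.map_neg_le _) _)

theorem kahlerSeminorm_smul_le (hmul : ∀ x y : B, vB (x * y) ≤ vB x * vB y) (a : B)
    (x : Ω[B⁄A]) : kahlerSeminorm A B vB (a • x) ≤ vB a * kahlerSeminorm A B vB x :=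
  le_mul_kahlerSeminorm fun n c b hx => by
    refine (kahlerSeminorm_le_of_eq_sum (c := fun i => a * c i) (b := b)
      (by simp [hx, Finset.smul_sum, smul_smul])).trans ?_
    rw [NNReal.mul_finset_sup]
    exact Finset.sup_mono_fun fun i _ =>
      (mul_le_mul_left (hmul a (c i)) _).trans_eq (mul_assoc _ _ _)

theorem isModuleSeminorm_kahlerSeminorm (hB : IsRingSeminorm vB) :
    IsModuleSeminorm vB (kahlerSeminorm A B vB) := by
  refine ⟨⟨kahlerSeminorm_zero, fun x y => ?_⟩, kahlerSeminorm_smul_le hB.2.2⟩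
  rw [sub_eq_add_neg]
  exact (kahlerSeminorm_add_le x (-y)).trans (max_le_max le_rfl (kahlerSeminorm_neg_le hB.1 y))

theorem kahlerSeminorm_D_le (h1 : vB 1 ≤ 1) (b : B) :
    kahlerSeminorm A B vB (D A B b) ≤ vB b :=
  (kahlerSeminorm_le_of_eq_sum (n := 1) (c := 1) (b := fun _ => b) (by simp)).trans
    (by simpa using mul_le_of_le_one_left' h1)

theorem le_kahlerSeminorm_of_isModuleSeminorm {w : Ω[B⁄A] → ℝ≥0} (hw : IsModuleSeminorm vB w)
    (hwD : ∀ b : B, w (D A B b) ≤ vB b) (x : Ω[B⁄A]) : w x ≤ kahlerSeminorm A B vB x :=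
  le_kahlerSeminorm fun _ _ _ hx => hx ▸ (hw.1.map_sum_le _ _).trans
    (Finset.sup_mono_fun fun _ _ => (hw.2 _ _).trans (mul_le_mul_right (hwD _) _))

theorem Derivation.liftKaehlerDifferential_le_kahlerSeminorm {M : Type*} [AddCommGroup M]
    [Module A M] [Module B M] [IsScalarTower A B M] {vM : M → ℝ≥0} (hM : IsModuleSeminorm vB vM)
    {D' : Derivation A B M} (hD' : ∀ b : B, vM (D' b) ≤ vB b) (x : Ω[B⁄A]) :
    vM (D'.liftKaehlerDifferential x) ≤ kahlerSeminorm A B vB x :=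
  le_kahlerSeminorm_of_isModuleSeminorm (hM.comp_linearMap _) (fun b => by simpa using hD' b) x

end kahlerSeminorm

theorem kahlerSeminorm_universal_property_general
    {A B : Type*} [CommRing A] [CommRing B] [Algebra A B]
    (vB : B → ℝ≥0) (hB : IsRingSeminorm vB) :
    -- (i)
    (IsModuleSeminorm vB (kahlerSeminorm A B vB) ∧
      (∀ b : B, kahlerSeminorm A B vB (KaehlerDifferential.D A B b) ≤ vB b) ∧
      (∀ w : Ω[B⁄A] → ℝ≥0, IsModuleSeminorm vB w →
        (∀ b : B, w (KaehlerDifferential.D A B b) ≤ vB b) →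
        ∀ x, w x ≤ kahlerSeminorm A B vB x)) ∧
    -- (ii)
    (∀ (M : Type u) [AddCommGroup M] [Module A M] [Module B M] [IsScalarTower A B M]
      (vM : M → ℝ≥0), IsModuleSeminorm vB vM →
      ∀ D : Derivation A B M, (∀ b : B, vM (D b) ≤ vB b) →
      ∃! g : Ω[B⁄A] →ₗ[B] M,
        (∀ x, vM (g x) ≤ kahlerSeminorm A B vB x) ∧
        (∀ b : B, g (KaehlerDifferential.D A B b) = D b)) := by
  refine ⟨⟨isModuleSeminorm_kahlerSeminorm hB, kahlerSeminorm_D_le hB.2.1.le,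
    fun _ hw hwD => le_kahlerSeminorm_of_isModuleSeminorm hw hwD⟩, ?_⟩
  intro M _ _ _ _ vM hM D hD
  refine ⟨D.liftKaehlerDifferential,
    ⟨D.liftKaehlerDifferential_le_kahlerSeminorm hM hD, D.liftKaehlerDifferential_comp_D⟩, ?_⟩
  rintro g ⟨-, hg⟩
  exact Derivation.liftKaehlerDifferential_unique _ _ (Derivation.ext fun b => by simp [hg])

/-- Universal property of the Kähler seminorm: (i) it is a `B`-module seminorm making the
universal derivation `d : B → Ω_{B/A}` non-expansive, and is maximal among such seminorms;
(ii) `d` is the universal non-expansive `A`-derivation of `B` with values in seminormed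
`B`-modules: every non-expansive `A`-derivation `B → M` factors uniquely through a
non-expansive `B`-linear map `Ω_{B/A} → M`. -/
theorem kahlerSeminorm_universal_property
    {A B : Type*} [CommRing A] [CommRing B] [Algebra A B]
    (vA : A → ℝ≥0) (vB : B → ℝ≥0)
    (hA : IsRingSeminorm vA) (hB : IsRingSeminorm vB)
    (hnonexp : ∀ a : A, vB (algebraMap A B a) ≤ vA a) :
    -- (i)
    (IsModuleSeminorm vB (kahlerSeminorm A B vB) ∧
      (∀ b : B, kahlerSeminorm A B vB (KaehlerDifferential.D A B b) ≤ vB b) ∧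
      (∀ w : Ω[B⁄A] → ℝ≥0, IsModuleSeminorm vB w →
        (∀ b : B, w (KaehlerDifferential.D A B b) ≤ vB b) →
        ∀ x, w x ≤ kahlerSeminorm A B vB x)) ∧
    -- (ii)
    (∀ (M : Type u) [AddCommGroup M] [Module A M] [Module B M] [IsScalarTower A B M]
      (vM : M → ℝ≥0), IsModuleSeminorm vB vM →
      ∀ D : Derivation A B M, (∀ b : B, vM (D b) ≤ vB b) →
      ∃! g : Ω[B⁄A] →ₗ[B] M,
        (∀ x, vM (g x) ≤ kahlerSeminorm A B vB x) ∧
        (∀ b : B, g (KaehlerDifferential.D A B b) = D b)) :=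
  kahlerSeminorm_universal_property_general vB hB
end

section
/- Let K be a real-valued field whose residue field K̃ = K°/K°° is perfect, let p be the exponential characteristic of K̃ (p = char K̃ if this is positive, p = 1 otherwise), and assume the value group |K^×| ⊆ ℝ_{>0} is p-divisible. Let L = K(t₁,…,tₙ) be a purely transcendental extension equipped with a nonarchimedean absolute value extending that of K, and set rᵢ = |tᵢ| > 0. If dt₁/t₁, …, dtₙ/tₙ form an orthonormal basis of Ω_{L/K} with respect to the Kähler seminorm, then the absolute value of L restricts on the polynomial ring K[t₁,…,tₙ] to the Gauss absolute value |·|_r, i.e., |Σ_{l∈ℕⁿ} a_l t^l| = max_l |a_l|·r₁^{l₁}⋯rₙ^{lₙ}. -/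
/-!
Write `G(P) = max_l |a_l| r^l` for the Gauss value. Always `|P(t)| ≤ G(P)`, and equality is
proved by induction on the total degree. Since `dP = ∑ tᵢ ∂ᵢP · dtᵢ/tᵢ` and `‖dP‖ ≤ |P|`,
orthonormality gives `|tᵢ ∂ᵢP(t)| ≤ |P(t)|`. If some exponent `l` attaining `G(P)` has a
coordinate `lᵢ` that is nonzero in the residue field, then `∂ᵢP` has a coefficient of the same
size at `l - eᵢ`, so `G(P) ≤ rᵢ G(∂ᵢP) = rᵢ |∂ᵢP(t)| ≤ |P(t)|`. Otherwise all dominant exponents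
are divisible by `p` (they vanish when `p = 1`). As the residue field is perfect and the value
group `p`-divisible, each dominant coefficient is a `p`-th power up to lower order, so `P(t)`
equals `Q(t)^p` up to lower order for a polynomial `Q` of smaller degree: `(∑ xⱼ)^p - ∑ xⱼ^p`
is divisible by `p` and `|p| < 1`. By induction `|Q(t)| = G(Q) = G(P)^(1/p)`.
-/

open scoped NNReal

open MvPolynomial

namespace Valuation

variable {R Γ₀ : Type*} [CommRing R] [LinearOrderedCommMonoidWithZero Γ₀] (v : Valuation R Γ₀)

theorem map_natCast_le_one (m : ℕ) : v m ≤ 1 := by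
  induction m with
  | zero => simp
  | succ m ih => simpa using v.map_add_le ih v.map_one.le

theorem map_add_pow_sub_pow_sub_pow_le {p : ℕ} (hp : p.Prime) {x y : R} {B : Γ₀}
    (hx : v x ≤ B) (hy : v y ≤ B) :
    v ((x + y) ^ p - x ^ p - y ^ p) ≤ v p * B ^ p := by
  rw [add_pow_prime_eq' hp, show ∀ a b c : R, a + b + c - a - b = c by intros; ring, map_mul]
  refine mul_le_mul_right (v.map_sum_le fun k hk => ?_) _
  have hkp : k ≤ p := (Finset.mem_Ioo.mp hk).2.le
  calc v (x ^ k * y ^ (p - k) * ((p.choose k / p : ℕ) : R))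
      ≤ B ^ k * B ^ (p - k) * 1 := by
        rw [map_mul, map_mul, map_pow, map_pow]
        gcongr
        exact v.map_natCast_le_one _
    _ = B ^ p := by rw [mul_one, ← pow_add, Nat.add_sub_cancel' hkp]

theorem map_sum_pow_sub_sum_pow_le {ι : Type*} {p : ℕ} (hp : p.Prime) (s : Finset ι) {x : ι → R}
    {B : Γ₀} (hx : ∀ i ∈ s, v (x i) ≤ B) :
    v ((∑ i ∈ s, x i) ^ p - ∑ i ∈ s, x i ^ p) ≤ v p * B ^ p := by
  classical
  induction s using Finset.induction_on with
  | empty => simp [zero_pow hp.ne_zero]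
  | insert a s ha ih =>
    simp only [Finset.forall_mem_insert] at hx
    rw [Finset.sum_insert ha, Finset.sum_insert ha]
    have hsplit : (x a + ∑ i ∈ s, x i) ^ p - (x a ^ p + ∑ i ∈ s, x i ^ p)
        = ((x a + ∑ i ∈ s, x i) ^ p - x a ^ p - (∑ i ∈ s, x i) ^ p)
          + ((∑ i ∈ s, x i) ^ p - ∑ i ∈ s, x i ^ p) := by ring
    rw [hsplit]
    exact v.map_add_le (v.map_add_pow_sub_pow_sub_pow_le hp hx.1 (v.map_sum_le hx.2)) (ih hx.2)

end Valuation

section ResidueField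

variable {K k Γ₀ : Type*} [Field K] [Field k] [LinearOrderedCommGroupWithZero Γ₀]
  {v : Valuation K Γ₀} {π : v.integer →+* k}

theorem Valuation.map_natCast_lt_one_iff (hπker : ∀ x : v.integer, π x = 0 ↔ v x < 1) (m : ℕ) :
    v m < 1 ↔ (m : k) = 0 := by
  rw [← map_natCast π m, hπker]
  simp

theorem Valuation.map_natCast_eq_one_iff (hπker : ∀ x : v.integer, π x = 0 ↔ v x < 1) (m : ℕ) :
    v m = 1 ↔ (m : k) ≠ 0 := by
  rw [Ne, ← v.map_natCast_lt_one_iff hπker, (v.map_natCast_le_one m).lt_iff_ne, not_not]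

theorem Valuation.exists_val_pow_eq_and_val_sub_pow_lt
    (hπker : ∀ x : v.integer, π x = 0 ↔ v x < 1) (hπsurj : Function.Surjective π)
    (p : ℕ) [ExpChar k p] [PerfectRing k p] (hdiv : ∀ x : K, x ≠ 0 → ∃ y : K, v y ^ p = v x)
    {a : K} (ha : a ≠ 0) : ∃ c : K, v c ^ p = v a ∧ v (a - c ^ p) < v a := by
  have hva : v a ≠ 0 := by simpa using ha
  obtain _ | ⟨hp⟩ := ‹ExpChar k p›
  · exact ⟨a, by simp, by simpa using zero_lt_iff.mpr hva⟩
  obtain ⟨b, hb⟩ := hdiv a ha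
  have hb0 : b ≠ 0 := by rintro rfl; simp [zero_pow hp.ne_zero] at hb; exact hva hb.symm
  have hu : v (a / b ^ p) = 1 := by rw [map_div₀, map_pow, hb, div_self hva]
  let u : v.integer := ⟨a / b ^ p, hu.le⟩
  obtain ⟨w, hw⟩ := surjective_frobenius k p (π u)
  obtain ⟨y, rfl⟩ := hπsurj w
  have hyu : v ((y : K) ^ p - a / b ^ p) < 1 := by
    have := (hπker (y ^ p - u)).mp (by rw [_root_.map_sub, map_pow, ← hw, frobenius_def, sub_self])
    simpa [u] using this
  have hyp : v ((y : K) ^ p) = 1 := by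
    rw [← add_sub_cancel (a / b ^ p) ((y : K) ^ p), v.map_add_eq_of_lt_left (by rwa [hu]), hu]
  refine ⟨b * y, ?_, ?_⟩
  · rw [← map_pow, mul_pow, map_mul, map_pow, hb, hyp, mul_one]
  · have hsplit : a - (b * y) ^ p = b ^ p * -((y : K) ^ p - a / b ^ p) := by
      field_simp
      ring
    rw [hsplit, map_mul, map_neg, map_pow, hb]
    exact mul_lt_of_lt_one_right (zero_lt_iff.mpr hva) hyu

end ResidueField

theorem Derivation.map_aeval_eq_sum_pderiv {R A M σ : Type*} [CommRing R] [CommRing A] [Algebra R A]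
    [AddCommGroup M] [Module A M] [Module R M] [IsScalarTower R A M] [Fintype σ]
    (d : Derivation R A M) (t : σ → A) (P : MvPolynomial σ R) :
    d (aeval t P) = ∑ i, aeval t (pderiv i P) • d (t i) := by
  classical
  induction P using MvPolynomial.induction_on with
  | C a => simp
  | add p q hp hq => simp only [map_add, hp, hq, add_smul, Finset.sum_add_distrib]
  | mul_X p j hp =>
    simp [Derivation.leibniz, hp, pderiv_X, Pi.single_apply, add_smul, Finset.sum_add_distrib,
      mul_smul, Finset.smul_sum, add_comm, mul_comm, apply_ite]

theorem MvPolynomial.totalDegree_pderiv_lt {R σ : Type*} [CommSemiring R] {P : MvPolynomial σ R}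
    (hP : 0 < P.totalDegree) (i : σ) : (pderiv i P).totalDegree < P.totalDegree := by
  classical
  refine (Finset.sup_lt_iff hP).mpr fun m hm => ?_
  have hm' : m + Finsupp.single i 1 ∈ P.support := by
    rw [mem_support_iff] at hm ⊢
    rw [coeff_pderiv] at hm
    exact left_ne_zero_of_mul hm
  calc (m.sum fun _ e => e) < (m + Finsupp.single i 1).sum fun _ e => e := by
        rw [Finsupp.sum_add_index' (fun _ => rfl) (fun _ _ _ => rfl), Finsupp.sum_single_index rfl]
        omega
    _ ≤ P.totalDegree := le_totalDegree hm'

theorem MvPolynomial.degree_lt_totalDegree_of_nsmul_mem_support {R σ : Type*} [CommSemiring R]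
    {P : MvPolynomial σ R} (hP : 0 < P.totalDegree) {p : ℕ} (hp : 1 < p) {m : σ →₀ ℕ}
    (hm : p • m ∈ P.support) : m.degree < P.totalDegree := by
  rcases eq_or_ne m 0 with rfl | hm0
  · simpa using hP
  have hle : (p • m).degree ≤ P.totalDegree := le_totalDegree hm
  rw [map_nsmul, smul_eq_mul] at hle
  have hpos : 0 < m.degree := Nat.pos_of_ne_zero ((Finsupp.degree_eq_zero_iff m).not.mpr hm0)
  nlinarith

section GaussValue

variable {K σ : Type*} [Field K] [Fintype σ] (v : Valuation K ℝ≥0) (r : σ → ℝ≥0)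

noncomputable def gaussVal (P : MvPolynomial σ K) : ℝ≥0 :=
  P.support.sup fun l => v (coeff l P) * ∏ i, r i ^ l i

noncomputable def dominantSupport (P : MvPolynomial σ K) : Finset (σ →₀ ℕ) :=
  P.support.filter fun l => v (coeff l P) * ∏ i, r i ^ l i = gaussVal v r P

variable {v r}

theorem le_gaussVal (P : MvPolynomial σ K) (l : σ →₀ ℕ) :
    v (coeff l P) * ∏ i, r i ^ l i ≤ gaussVal v r P := by
  by_cases hl : l ∈ P.support
  · exact Finset.le_sup (f := fun l => v (coeff l P) * ∏ i, r i ^ l i) hl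
  · simp [notMem_support_iff.mp hl]

theorem gaussVal_lt_iff {P : MvPolynomial σ K} {g : ℝ≥0} (hg : 0 < g) :
    gaussVal v r P < g ↔ ∀ l ∈ P.support, v (coeff l P) * ∏ i, r i ^ l i < g :=
  Finset.sup_lt_iff hg

theorem gaussVal_C (a : K) : gaussVal v r (C a) = v a := by
  classical
  by_cases ha : a = 0
  · simp [gaussVal, ha]
  · simp [gaussVal, support_C, ha]

theorem exists_mem_support_gaussVal_eq {P : MvPolynomial σ K} (hP : P ≠ 0) :
    ∃ l ∈ P.support, v (coeff l P) * ∏ i, r i ^ l i = gaussVal v r P := by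
  obtain ⟨l, hl, h⟩ := Finset.exists_mem_eq_sup _ (support_nonempty.mpr hP)
    fun l => v (coeff l P) * ∏ i, r i ^ l i
  exact ⟨l, hl, h.symm⟩

theorem dominantSupport_nonempty {P : MvPolynomial σ K} (hP : P ≠ 0) :
    (dominantSupport v r P).Nonempty := by
  obtain ⟨l, hl, h⟩ := exists_mem_support_gaussVal_eq (v := v) (r := r) hP
  exact ⟨l, Finset.mem_filter.mpr ⟨hl, h⟩⟩

theorem gaussVal_pos (hr : ∀ i, 0 < r i) {P : MvPolynomial σ K} (hP : P ≠ 0) :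
    0 < gaussVal v r P := by
  obtain ⟨l, hl, h⟩ := exists_mem_support_gaussVal_eq (v := v) (r := r) hP
  rw [← h]
  have : v (coeff l P) ≠ 0 := by simpa using mem_support_iff.mp hl
  exact mul_pos (pos_iff_ne_zero.mpr this) (Finset.prod_pos fun i _ => pow_pos (hr i) _)

theorem lt_gaussVal_of_notMem_dominantSupport {P : MvPolynomial σ K} {l : σ →₀ ℕ}
    (hl : l ∈ P.support) (hl' : l ∉ dominantSupport v r P) :
    v (coeff l P) * ∏ i, r i ^ l i < gaussVal v r P :=
  (le_gaussVal P l).lt_of_ne fun h => hl' (Finset.mem_filter.mpr ⟨hl, h⟩)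

theorem gaussVal_le_mul_gaussVal_pderiv {P : MvPolynomial σ K} {l : σ →₀ ℕ}
    (hl : l ∈ dominantSupport v r P) {i : σ} (hli : v (l i : K) = 1) :
    gaussVal v r P ≤ r i * gaussVal v r (pderiv i P) := by
  classical
  have hli0 : l i ≠ 0 := by rintro h; simp [h] at hli
  set l' := l - Finsupp.single i 1
  have hl' : l' + Finsupp.single i 1 = l := tsub_add_cancel_of_le <| by
    simpa [Finsupp.single_le_iff] using Nat.one_le_iff_ne_zero.mpr hli0
  have hcoeff : coeff l' (pderiv i P) = coeff l P * l i := by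
    rw [coeff_pderiv, hl', ← congrArg (· i) hl', Finsupp.add_apply, Finsupp.single_eq_same]
    push_cast; ring
  have hprod : ∏ j, r j ^ l j = r i * ∏ j, r j ^ l' j := by
    conv_lhs => rw [← hl']
    simp only [Finsupp.add_apply, pow_add, Finset.prod_mul_distrib, Finsupp.single_apply]
    simp [mul_comm]
  calc gaussVal v r P = v (coeff l P) * ∏ j, r j ^ l j := (Finset.mem_filter.mp hl).2.symm
    _ = r i * (v (coeff l' (pderiv i P)) * ∏ j, r j ^ l' j) := by
      rw [hcoeff, map_mul, hli, hprod]; ring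
    _ ≤ r i * gaussVal v r (pderiv i P) := mul_le_mul_right (le_gaussVal _ _) _

theorem gaussVal_pow_eq_of_forall_mem_support {P : MvPolynomial σ K} (hP : P ≠ 0) {p : ℕ}
    {g : ℝ≥0} (h : ∀ l ∈ P.support, (v (coeff l P) * ∏ i, r i ^ l i) ^ p = g) :
    gaussVal v r P ^ p = g := by
  obtain ⟨l, hl, hlG⟩ := exists_mem_support_gaussVal_eq (v := v) (r := r) hP
  rw [← hlG, h l hl]

theorem gaussVal_sub_sum_monomial_lt (hr : ∀ i, 0 < r i) {P : MvPolynomial σ K} (hP : P ≠ 0)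
    {c : (σ →₀ ℕ) → K} (hc : ∀ l ∈ dominantSupport v r P, v (coeff l P - c l) < v (coeff l P)) :
    gaussVal v r (P - ∑ l ∈ dominantSupport v r P, monomial l (c l)) < gaussVal v r P := by
  classical
  refine (gaussVal_lt_iff (gaussVal_pos hr hP)).mpr fun l hl => ?_
  have hcoeff : coeff l (P - ∑ m ∈ dominantSupport v r P, monomial m (c m))
      = coeff l P - if l ∈ dominantSupport v r P then c l else 0 := by
    simp [coeff_sum, coeff_monomial]
  rw [mem_support_iff, hcoeff] at hl
  rw [hcoeff]
  by_cases hlM : l ∈ dominantSupport v r P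
  · rw [if_pos hlM]
    calc _ < v (coeff l P) * ∏ i, r i ^ l i :=
          mul_lt_mul_of_pos_right (hc l hlM) (Finset.prod_pos fun i _ => pow_pos (hr i) _)
      _ = gaussVal v r P := (Finset.mem_filter.mp hlM).2
  · rw [if_neg hlM, sub_zero] at hl ⊢
    exact lt_gaussVal_of_notMem_dominantSupport (mem_support_iff.mpr hl) hlM

theorem exists_pth_root_of_dominantSupport {P : MvPolynomial σ K} (hP : 0 < P.totalDegree)
    {p : ℕ} (hp : p.Prime) (hdvd : ∀ l ∈ dominantSupport v r P, ∀ i, p ∣ l i)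
    {c : (σ →₀ ℕ) → K} (hc : ∀ l ∈ dominantSupport v r P, v (c l) ^ p = v (coeff l P)) :
    ∃ Q : MvPolynomial σ K, Q.totalDegree < P.totalDegree ∧
      gaussVal v r Q ^ p = gaussVal v r P ∧
      ∑ m ∈ Q.support, monomial m (coeff m Q) ^ p
        = ∑ l ∈ dominantSupport v r P, monomial l (c l ^ p) := by
  classical
  have hP0 : P ≠ 0 := by rintro rfl; simp at hP
  set M := dominantSupport v r P
  have hM : ∀ l ∈ M, l ∈ P.support ∧ v (coeff l P) * ∏ i, r i ^ l i = gaussVal v r P :=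
    fun l hl => Finset.mem_filter.mp hl
  have hinj : Function.Injective (p • · : (σ →₀ ℕ) → σ →₀ ℕ) := smul_right_injective _ hp.ne_zero
  have hrange : ∀ l ∈ M, ∃ m, p • m = l := fun l hl =>
    ⟨l.mapRange (· / p) (Nat.zero_div p), Finsupp.ext fun i => by
      simp [Nat.mul_div_cancel' (hdvd l hl i)]⟩
  set N := M.preimage (p • ·) hinj.injOn
  set Q := ∑ m ∈ N, monomial m (c (p • m))
  have hQcoeff : ∀ m, coeff m Q = if m ∈ N then c (p • m) else 0 := by
    intro m
    simp [Q, coeff_sum, coeff_monomial]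
  have hQsupp : Q.support = N := by
    ext m
    rw [mem_support_iff, hQcoeff]
    split_ifs with hm
    · refine iff_of_true (fun h0 => ?_) hm
      have hm' := Finset.mem_preimage.mp hm
      have := hc _ hm'
      rw [h0, map_zero, zero_pow hp.ne_zero, eq_comm, Valuation.zero_iff] at this
      exact mem_support_iff.mp (hM _ hm').1 this
    · simpa using hm
  have hQ0 : Q ≠ 0 := by
    obtain ⟨l, hl⟩ := dominantSupport_nonempty (v := v) (r := r) hP0
    obtain ⟨m, rfl⟩ := hrange l hl
    rw [← support_nonempty, hQsupp]
    exact ⟨m, Finset.mem_preimage.mpr hl⟩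
  refine ⟨Q, ?_, ?_, ?_⟩
  · refine (totalDegree_finsetSum _ _).trans_lt ((Finset.sup_lt_iff hP).mpr fun m hm => ?_)
    exact (totalDegree_monomial_le _ _).trans_lt (degree_lt_totalDegree_of_nsmul_mem_support hP
      hp.one_lt (hM _ (Finset.mem_preimage.mp hm)).1)
  · refine gaussVal_pow_eq_of_forall_mem_support hQ0 fun m hm => ?_
    rw [hQsupp] at hm
    have hm' := Finset.mem_preimage.mp hm
    rw [hQcoeff, if_pos hm, mul_pow, hc _ hm', ← (hM _ hm').2, ← Finset.prod_pow]
    simp only [← pow_mul, Finsupp.smul_apply, smul_eq_mul, mul_comm]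
  · rw [hQsupp, ← Finset.sum_preimage (p • ·) M hinj.injOn _ fun l hl hlr =>
      absurd (hrange l hl) (by simpa [Set.mem_range] using hlr)]
    refine Finset.sum_congr rfl fun m hm => ?_
    rw [hQcoeff, if_pos hm, monomial_pow]

end GaussValue

theorem kahlerSeminorm_D_le_s10 {A B : Type*} [CommRing A] [CommRing B] [Algebra A B]
    (v : Valuation B ℝ≥0) (b : B) :
    kahlerSeminorm A B (v ·) (KaehlerDifferential.D A B b) ≤ v b :=
  csInf_le (OrderBot.bddBelow _) ⟨1, fun _ => 1, fun _ => b, by simp, by simp⟩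

section Evaluation

variable {K L σ : Type*} [Field K] [Field L] [Algebra K L] [Fintype σ]
  {vK : Valuation K ℝ≥0} {vL : Valuation L ℝ≥0}

theorem valuation_mul_aeval_pderiv_le {t : σ → L} (ht : ∀ i, t i ≠ 0)
    (horth : ∀ a : σ → L,
      kahlerSeminorm K L (vL ·) (∑ i, a i • ((t i)⁻¹ • KaehlerDifferential.D K L (t i)))
        = Finset.univ.sup fun i => vL (a i))
    (P : MvPolynomial σ K) (i : σ) :
    vL (t i) * vL (aeval t (pderiv i P)) ≤ vL (aeval t P) := by
  have hD : KaehlerDifferential.D K L (aeval t P) = ∑ j, (t j * aeval t (pderiv j P)) •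
      ((t j)⁻¹ • KaehlerDifferential.D K L (t j)) := by
    rw [Derivation.map_aeval_eq_sum_pderiv]
    refine Finset.sum_congr rfl fun j _ => ?_
    rw [smul_smul, mul_comm (t j), mul_assoc, mul_inv_cancel₀ (ht j), mul_one]
  calc vL (t i) * vL (aeval t (pderiv i P)) = vL (t i * aeval t (pderiv i P)) := (map_mul ..).symm
    _ ≤ Finset.univ.sup fun j => vL (t j * aeval t (pderiv j P)) :=
      Finset.le_sup (f := fun j => vL (t j * aeval t (pderiv j P))) (Finset.mem_univ i)
    _ = kahlerSeminorm K L (vL ·) (KaehlerDifferential.D K L (aeval t P)) := by rw [hD, horth]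
    _ ≤ vL (aeval t P) := kahlerSeminorm_D_le_s10 vL _

theorem valuation_aeval_monomial (hext : ∀ x : K, vL (algebraMap K L x) = vK x) (t : σ → L)
    (l : σ →₀ ℕ) (a : K) : vL (aeval t (monomial l a)) = vK a * ∏ i, vL (t i) ^ l i := by
  rw [aeval_monomial, map_mul, hext, Finsupp.prod_fintype _ _ fun i => pow_zero _, map_prod]
  simp only [map_pow]

theorem valuation_aeval_le_gaussVal (hext : ∀ x : K, vL (algebraMap K L x) = vK x) (t : σ → L)
    (P : MvPolynomial σ K) : vL (aeval t P) ≤ gaussVal vK (fun i => vL (t i)) P := by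
  conv_lhs => rw [← P.support_sum_monomial_coeff]
  rw [map_sum]
  exact vL.map_sum_le fun l _ => (valuation_aeval_monomial hext t l _).trans_le (le_gaussVal P l)

theorem valuation_aeval_pow_sub_sum_pow_le (hext : ∀ x : K, vL (algebraMap K L x) = vK x)
    (t : σ → L) {p : ℕ} (hp : p.Prime) (Q : MvPolynomial σ K) :
    vL (aeval t Q ^ p - ∑ m ∈ Q.support, aeval t (monomial m (coeff m Q)) ^ p)
      ≤ vL p * gaussVal vK (fun i => vL (t i)) Q ^ p := by
  nth_rw 1 [← Q.support_sum_monomial_coeff]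
  rw [map_sum]
  exact vL.map_sum_pow_sub_sum_pow_le hp _ fun m _ =>
    (valuation_aeval_monomial hext t m _).trans_le (le_gaussVal Q m)

end Evaluation

section PowerApproximation

variable {K L k σ : Type*} [Field K] [Field L] [Algebra K L] [Field k] [Fintype σ]
  {vK : Valuation K ℝ≥0} {vL : Valuation L ℝ≥0} {π : vK.integer →+* k} {t : σ → L}
  {P : MvPolynomial σ K}

theorem exists_lower_degree_pow_approx_of_charZero [CharZero k]
    (hext : ∀ x : K, vL (algebraMap K L x) = vK x)
    (ht : ∀ i, 0 < vL (t i)) (hP : 0 < P.totalDegree)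
    (hdom : ∀ l ∈ dominantSupport vK (fun i => vL (t i)) P, ∀ i, (l i : k) = 0) :
    ∃ Q : MvPolynomial σ K, Q.totalDegree < P.totalDegree ∧
      gaussVal vK (fun i => vL (t i)) Q = gaussVal vK (fun i => vL (t i)) P ∧
      vL (aeval t P - aeval t Q) < gaussVal vK (fun i => vL (t i)) P := by
  classical
  have hP0 : P ≠ 0 := by rintro rfl; simp at hP
  set M := dominantSupport vK (fun i => vL (t i)) P
  have hM : ∀ l ∈ M, l = 0 := fun l hl => Finsupp.ext fun i => by exact_mod_cast hdom l hl i
  obtain ⟨l₀, hl₀⟩ := dominantSupport_nonempty (v := vK) (r := fun i => vL (t i)) hP0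
  have h0 : (0 : σ →₀ ℕ) ∈ M := hM l₀ hl₀ ▸ hl₀
  have hMeq : M = {0} := Finset.eq_singleton_iff_unique_mem.mpr ⟨h0, hM⟩
  refine ⟨C (coeff 0 P), by simpa using hP, ?_, ?_⟩
  · simpa [gaussVal_C] using (Finset.mem_filter.mp h0).2
  · have hsum : ∑ l ∈ M, monomial l (coeff l P) = C (coeff 0 P) := by simp [hMeq]
    rw [← map_sub, ← hsum]
    refine (valuation_aeval_le_gaussVal hext t _).trans_lt
      (gaussVal_sub_sum_monomial_lt ht hP0 fun l hl => ?_)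
    simpa [pos_iff_ne_zero] using mem_support_iff.mp (Finset.mem_filter.mp hl).1

theorem exists_lower_degree_pow_approx_of_charP (hext : ∀ x : K, vL (algebraMap K L x) = vK x)
    (hπsurj : Function.Surjective π) (hπker : ∀ x : vK.integer, π x = 0 ↔ vK x < 1)
    (p : ℕ) [Fact p.Prime] [CharP k p] [PerfectRing k p]
    (hdiv : ∀ x : K, x ≠ 0 → ∃ y : K, vK y ^ p = vK x)
    (ht : ∀ i, 0 < vL (t i)) (hP : 0 < P.totalDegree)
    (hdom : ∀ l ∈ dominantSupport vK (fun i => vL (t i)) P, ∀ i, (l i : k) = 0) :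
    ∃ Q : MvPolynomial σ K, Q.totalDegree < P.totalDegree ∧
      gaussVal vK (fun i => vL (t i)) Q ^ p = gaussVal vK (fun i => vL (t i)) P ∧
      vL (aeval t P - aeval t Q ^ p) < gaussVal vK (fun i => vL (t i)) P := by
  have hp : p.Prime := Fact.out
  have hP0 : P ≠ 0 := by rintro rfl; simp at hP
  choose! c hc using fun l (hl : l ∈ dominantSupport vK (fun i => vL (t i)) P) =>
    vK.exists_val_pow_eq_and_val_sub_pow_lt hπker hπsurj p hdiv
      (mem_support_iff.mp (Finset.mem_filter.mp hl).1)
  obtain ⟨Q, hQd, hQG, hQsum⟩ := exists_pth_root_of_dominantSupport hP hp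
    (fun l hl i => (CharP.cast_eq_zero_iff k p _).mp (hdom l hl i)) fun l hl => (hc l hl).1
  have hvp : vL p < 1 := by
    rw [← map_natCast (algebraMap K L), hext, vK.map_natCast_lt_one_iff hπker]
    exact CharP.cast_eq_zero k p
  have hsplit : aeval t P - aeval t Q ^ p
      = aeval t (P - ∑ l ∈ dominantSupport vK (fun i => vL (t i)) P, monomial l (c l ^ p))
        - (aeval t Q ^ p - ∑ m ∈ Q.support, aeval t (monomial m (coeff m Q)) ^ p) := by
    simp only [← map_pow, ← map_sum, hQsum, map_sub]
    ring
  refine ⟨Q, hQd, hQG, ?_⟩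
  rw [hsplit]
  refine (vL.map_sub _ _).trans_lt (max_lt ?_ ?_)
  · exact (valuation_aeval_le_gaussVal hext t _).trans_lt
      (gaussVal_sub_sum_monomial_lt ht hP0 fun l hl => (hc l hl).2)
  · refine (valuation_aeval_pow_sub_sum_pow_le hext t hp Q).trans_lt ?_
    rw [hQG]
    exact mul_lt_of_lt_one_left (gaussVal_pos ht hP0) hvp

theorem exists_lower_degree_pow_approx (hext : ∀ x : K, vL (algebraMap K L x) = vK x)
    (hπsurj : Function.Surjective π) (hπker : ∀ x : vK.integer, π x = 0 ↔ vK x < 1)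
    (p : ℕ) [ExpChar k p] [PerfectRing k p] (hdiv : ∀ x : K, x ≠ 0 → ∃ y : K, vK y ^ p = vK x)
    (ht : ∀ i, 0 < vL (t i)) (hP : 0 < P.totalDegree)
    (hdom : ∀ l ∈ dominantSupport vK (fun i => vL (t i)) P, ∀ i, (l i : k) = 0) :
    ∃ Q : MvPolynomial σ K, Q.totalDegree < P.totalDegree ∧
      gaussVal vK (fun i => vL (t i)) Q ^ p = gaussVal vK (fun i => vL (t i)) P ∧
      vL (aeval t P - aeval t Q ^ p) < gaussVal vK (fun i => vL (t i)) P := by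
  obtain _ | ⟨hp⟩ := ‹ExpChar k p›
  · simpa using exists_lower_degree_pow_approx_of_charZero hext ht hP hdom
  · have := Fact.mk hp
    exact exists_lower_degree_pow_approx_of_charP hext hπsurj hπker p hdiv ht hP hdom

end PowerApproximation

theorem gauss_valuation_of_orthonormal_logarithmic_differentials_general
    {K L kres : Type*} [Field K] [Field L] [Algebra K L] [Field kres]
    (vK : Valuation K ℝ≥0) (vL : Valuation L ℝ≥0)
    (p : ℕ) [ExpChar kres p] [PerfectRing kres p]
    (π : ↥vK.integer →+* kres) (hπsurj : Function.Surjective π)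
    (hπker : ∀ x : vK.integer, π x = 0 ↔ vK ↑x < 1)
    (hdiv : ∀ x : K, x ≠ 0 → ∃ y : K, vK y ^ p = vK x)
    (hext : ∀ x : K, vL (algebraMap K L x) = vK x)
    {n : ℕ} (t : Fin n → L)
    (hindep : AlgebraicIndependent K t)
    (horth : ∀ a : Fin n → L,
      kahlerSeminorm K L (vL ·)
          (∑ i, a i • ((t i)⁻¹ • KaehlerDifferential.D K L (t i)))
        = Finset.univ.sup fun i => vL (a i)) :
    ∀ P : MvPolynomial (Fin n) K,
      vL (MvPolynomial.aeval t P)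
        = P.support.sup fun l => vK (MvPolynomial.coeff l P) * ∏ i, vL (t i) ^ l i := by
  have ht : ∀ i, t i ≠ 0 := hindep.ne_zero
  have hr : ∀ i, 0 < vL (t i) := fun i => by simpa [pos_iff_ne_zero] using ht i
  suffices h : ∀ P, vL (aeval t P) = gaussVal vK (fun i => vL (t i)) P from h
  intro P
  induction hd : P.totalDegree using Nat.strong_induction_on generalizing P with
  | _ d IH =>
  obtain rfl | hd0 := Nat.eq_zero_or_pos d
  · rw [totalDegree_eq_zero_iff_eq_C.mp hd, aeval_C, hext, gaussVal_C]
  subst hd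
  by_cases hA : ∃ l ∈ dominantSupport vK (fun i => vL (t i)) P, ∃ i, (l i : kres) ≠ 0
  · obtain ⟨l, hl, i, hli⟩ := hA
    refine le_antisymm (valuation_aeval_le_gaussVal hext t P) ?_
    calc gaussVal vK (fun i => vL (t i)) P
        ≤ vL (t i) * gaussVal vK (fun i => vL (t i)) (pderiv i P) :=
          gaussVal_le_mul_gaussVal_pderiv hl ((vK.map_natCast_eq_one_iff hπker _).mpr hli)
      _ = vL (t i) * vL (aeval t (pderiv i P)) := by
          rw [IH _ (totalDegree_pderiv_lt hd0 i) _ rfl]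
      _ ≤ vL (aeval t P) := valuation_mul_aeval_pderiv_le ht horth P i
  · push Not at hA
    obtain ⟨Q, hQd, hQG, hQ⟩ := exists_lower_degree_pow_approx hext hπsurj hπker p hdiv hr hd0 hA
    have hQp : vL (aeval t Q ^ p) = gaussVal vK (fun i => vL (t i)) P := by
      rw [map_pow, IH _ hQd Q rfl, hQG]
    rw [← sub_add_cancel (aeval t P) (aeval t Q ^ p), vL.map_add_eq_of_lt_right (hQp ▸ hQ), hQp]

/-- Let `K` be a real-valued field with perfect residue field of exponential characteristic `p`
and `p`-divisible value group, and let `L = K(t₁, …, tₙ)` be a purely transcendental extension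
equipped with an absolute value extending that of `K`. If `dt₁/t₁, …, dtₙ/tₙ` is an orthonormal
basis of `Ω_{L/K}` for the Kähler seminorm, then the absolute value of `L` restricts to the Gauss
absolute value on `K[t₁, …, tₙ]`: `|Σ a_l t^l| = max_l |a_l| · ∏ rᵢ^{lᵢ}` where `rᵢ = |tᵢ|`. -/
theorem gauss_valuation_of_orthonormal_logarithmic_differentials
    {K L kres : Type*} [Field K] [Field L] [Algebra K L] [Field kres]
    (vK : Valuation K ℝ≥0) (vL : Valuation L ℝ≥0)
    (p : ℕ) [ExpChar kres p] [PerfectRing kres p]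
    (π : ↥vK.integer →+* kres) (hπsurj : Function.Surjective π)
    (hπker : ∀ x : vK.integer, π x = 0 ↔ vK ↑x < 1)
    (hdiv : ∀ x : K, x ≠ 0 → ∃ y : K, vK y ^ p = vK x)
    (hext : ∀ x : K, vL (algebraMap K L x) = vK x)
    {n : ℕ} (t : Fin n → L)
    (hindep : AlgebraicIndependent K t)
    (hgen : ∀ x : L, ∃ P Q : MvPolynomial (Fin n) K,
      MvPolynomial.aeval t Q ≠ 0 ∧ x * MvPolynomial.aeval t Q = MvPolynomial.aeval t P)
    (horth : ∀ a : Fin n → L,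
      kahlerSeminorm K L (vL ·)
          (∑ i, a i • ((t i)⁻¹ • KaehlerDifferential.D K L (t i)))
        = Finset.univ.sup fun i => vL (a i)) :
    ∀ P : MvPolynomial (Fin n) K,
      vL (MvPolynomial.aeval t P)
        = P.support.sup fun l => vK (MvPolynomial.coeff l P) * ∏ i, vL (t i) ^ l i :=
  gauss_valuation_of_orthonormal_logarithmic_differentials_general vK vL p π hπsurj hπker hdiv hext
    t hindep horth
end

section
/- Let K be a real-valued field and let φ : M → N be a K°-linear homomorphism of K°-modules, with M and N equipped with their adic seminorms. Then: (i) φ is non-expansive, i.e., ‖φ(x)‖_adic ≤ ‖x‖_adic for all x ∈ M; (ii) if M and N are torsion-free, then φ is an isometry (‖φ(x)‖_adic = ‖x‖_adic for all x) if and only if every element of ker(φ) is divisible and coker(φ) contains no essential torsion element (i.e., every torsion element of coker(φ) is almost zero). -/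
/-!
In the valuation ring `K°` one has `a ∣ b ↔ |b| ≤ |a|`, so `x ∈ aM` depends only on `|a|`,
monotonically, and `‖x‖ < |b|` already forces `x ∈ bM`; in particular the elements of adic
seminorm `0` are exactly the divisible ones. Non-expansiveness is `φ(aM) ⊆ aN`.

For torsion-free modules `|b|·‖x‖ ≤ ‖bx‖`. If `φ` is an isometry, kernel elements have
seminorm `0`; and if `a u = φ x` then `‖x‖ ≤ |a|`, so `x ∈ cM` for some `c` with `|a| ≤ |c|` and
`|a/c|` as close to `1` as we like, and cancelling `c` in `c·(a/c)u = φ x` puts `(a/c)u` in the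
image. Conversely, if `φ x = c v` and `b v = φ w` with `|b|` close to `1`, then `bx - cw` lies in
the kernel, hence in `cM`, so `|b|·‖x‖ ≤ ‖bx‖ ≤ |c|`.
-/

open scoped NNReal

/-- The adic seminorm on a `K°`-module `M`: `‖x‖ = inf {|a| : a ∈ K°, x ∈ aM}`. -/
noncomputable def adicSeminorm {K : Type*} [Field K] (vK : Valuation K ℝ≥0)
    (M : Type*) [AddCommGroup M] [Module ↥vK.integer M] (x : M) : ℝ≥0 :=
  sInf { r | ∃ a : ↥vK.integer, (∃ y : M, x = a • y) ∧ r = vK ↑a }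

section

variable {K : Type*} [Field K] {vK : Valuation K ℝ≥0}
variable {M N : Type*} [AddCommGroup M] [AddCommGroup N]
variable [Module ↥vK.integer M] [Module ↥vK.integer N]

lemma adicSeminorm_le_of_eq_smul {a : ↥vK.integer} {x y : M} (h : x = a • y) :
    adicSeminorm vK M x ≤ vK ↑a :=
  csInf_le (OrderBot.bddBelow _) ⟨a, ⟨y, h⟩, rfl⟩

lemma le_adicSeminorm {r : ℝ≥0} {x : M}
    (h : ∀ (a : ↥vK.integer) (y : M), x = a • y → r ≤ vK ↑a) : r ≤ adicSeminorm vK M x :=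
  le_csInf ⟨_, 1, ⟨x, (one_smul _ x).symm⟩, rfl⟩ fun _ ⟨a, ⟨y, hy⟩, hr⟩ => hr ▸ h a y hy

lemma exists_eq_smul_of_adicSeminorm_lt {t : ℝ≥0} {x : M} (h : adicSeminorm vK M x < t) :
    ∃ (a : ↥vK.integer) (y : M), x = a • y ∧ vK ↑a < t := by
  by_contra! hx
  exact h.not_ge (le_adicSeminorm hx)

lemma adicSeminorm_zero : adicSeminorm vK M 0 = 0 :=
  le_antisymm
    (by simpa using adicSeminorm_le_of_eq_smul (vK := vK) (a := 0) (zero_smul _ (0 : M)).symm)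
    zero_le

lemma adicSeminorm_le_one (x : M) : adicSeminorm vK M x ≤ 1 := by
  simpa using adicSeminorm_le_of_eq_smul (vK := vK) (a := 1) (one_smul _ x).symm

lemma exists_eq_smul_of_le {a b : ↥vK.integer} {x y : M} (h : x = a • y)
    (hab : vK ↑a ≤ vK ↑b) : ∃ y' : M, x = b • y' := by
  obtain ⟨d, rfl⟩ := (Valuation.integer.integers vK).dvd_iff_le.mpr hab
  exact ⟨d • y, by rw [h, mul_smul]⟩

lemma exists_eq_smul_of_adicSeminorm_lt_valuation {b : ↥vK.integer} {x : M}
    (h : adicSeminorm vK M x < vK ↑b) : ∃ y : M, x = b • y := by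
  obtain ⟨a, y, hxy, hab⟩ := exists_eq_smul_of_adicSeminorm_lt h
  exact exists_eq_smul_of_le hxy hab.le

lemma adicSeminorm_map_le (φ : M →ₗ[↥vK.integer] N) (x : M) :
    adicSeminorm vK N (φ x) ≤ adicSeminorm vK M x :=
  le_adicSeminorm fun a y hxy => adicSeminorm_le_of_eq_smul (by rw [hxy, map_smul])

lemma le_adicSeminorm_smul [NoZeroSMulDivisors ↥vK.integer M] (b : ↥vK.integer) (x : M) :
    vK ↑b * adicSeminorm vK M x ≤ adicSeminorm vK M (b • x) := by
  refine le_adicSeminorm fun c y hbx => ?_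
  rcases le_total (vK ↑c) (vK ↑b) with hcb | hbc
  · obtain ⟨d, rfl⟩ := (Valuation.integer.integers vK).dvd_iff_le.mpr hcb
    rcases eq_or_ne b 0 with rfl | hb
    · simp
    have hx : x = d • y := smul_right_injective M hb (by simpa only [mul_smul] using hbx)
    calc vK ↑b * adicSeminorm vK M x ≤ vK ↑b * vK ↑d := by
          gcongr; exact adicSeminorm_le_of_eq_smul hx
      _ = vK ↑(b * d) := by rw [Subring.coe_mul, map_mul]
  · calc vK ↑b * adicSeminorm vK M x ≤ vK ↑b :=
          mul_le_of_le_one_right' (adicSeminorm_le_one x)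
      _ ≤ vK ↑c := hbc

lemma adicSeminorm_eq_zero_iff_forall_eq_pow_smul {π : ↥vK.integer} (hπlt : vK ↑π < 1)
    (hπtriv : π = 0 → ∀ y : K, y ≠ 0 → vK y = 1) {x : M} :
    adicSeminorm vK M x = 0 ↔ ∀ n : ℕ, ∃ y : M, x = π ^ n • y := by
  constructor
  · intro hx n
    rcases eq_or_ne π 0 with hπ | hπ
    · obtain ⟨a, y, rfl, ha⟩ := exists_eq_smul_of_adicSeminorm_lt (hx.trans_lt one_pos)
      have ha0 : a = 0 := by
        by_contra ha0
        exact ha.ne (hπtriv hπ _ (Subtype.coe_ne_coe.mpr ha0))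
      exact ⟨0, by simp [ha0]⟩
    · refine exists_eq_smul_of_adicSeminorm_lt_valuation (hx ▸ ?_)
      rw [Valuation.pos_iff]
      exact Subtype.coe_ne_coe.mpr (pow_ne_zero n hπ)
  · intro hx
    refine le_antisymm (ge_of_tendsto' (tendsto_pow_atTop_nhds_zero_of_lt_one zero_le hπlt)
      fun n => ?_) zero_le
    obtain ⟨y, hy⟩ := hx n
    simpa [map_pow] using adicSeminorm_le_of_eq_smul hy

variable (vK) in
def IsAlmostZero (z : M) : Prop :=
  ∀ r : ℝ≥0, r < 1 → ∃ a : ↥vK.integer, r < vK ↑a ∧ a • z = 0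

lemma isAlmostZero_of_le_adicSeminorm_map [NoZeroSMulDivisors ↥vK.integer N]
    {φ : M →ₗ[↥vK.integer] N} (hφ : ∀ x, adicSeminorm vK M x ≤ adicSeminorm vK N (φ x))
    {z : N ⧸ LinearMap.range φ} {a : ↥vK.integer} (ha : a ≠ 0) (hz : a • z = 0) :
    IsAlmostZero vK z := by
  obtain ⟨u, rfl⟩ := Submodule.Quotient.mk_surjective _ z
  obtain ⟨x, hx⟩ : a • u ∈ LinearMap.range φ := by
    rwa [← Submodule.Quotient.mk_eq_zero, Submodule.Quotient.mk_smul]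
  have hva : 0 < vK ↑a := (Valuation.pos_iff vK).mpr (Subtype.coe_ne_coe.mpr ha)
  intro r hr
  obtain ⟨s, hrs, hs0, hs1⟩ : ∃ s : ℝ≥0, r ≤ s ∧ 0 < s ∧ s < 1 :=
    ⟨max r 2⁻¹, le_max_left _ _, by positivity, max_lt hr (by norm_num)⟩
  obtain ⟨c, y, hxy, hac, hsc⟩ :
      ∃ (c : ↥vK.integer) (y : M), x = c • y ∧ vK ↑a ≤ vK ↑c ∧ s * vK ↑c < vK ↑a := by
    have hx_lt : adicSeminorm vK M x < vK ↑a / s :=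
      calc adicSeminorm vK M x ≤ adicSeminorm vK N (φ x) := hφ x
        _ ≤ vK ↑a := adicSeminorm_le_of_eq_smul hx
        _ < vK ↑a / s := (lt_div_iff₀ hs0).mpr (mul_lt_of_lt_one_right hva hs1)
    obtain ⟨c, y, hxy, hcs⟩ := exists_eq_smul_of_adicSeminorm_lt hx_lt
    rcases le_total (vK ↑c) (vK ↑a) with hca | hac
    · obtain ⟨y', hy'⟩ := exists_eq_smul_of_le hxy hca
      exact ⟨a, y', hy', le_rfl, mul_lt_of_lt_one_left hva hs1⟩
    · exact ⟨c, y, hxy, hac, (lt_div_iff₀' hs0).mp hcs⟩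
  obtain ⟨b, rfl⟩ := (Valuation.integer.integers vK).dvd_iff_le.mpr hac
  have hc : c ≠ 0 := by rintro rfl; simp at ha
  rw [Subring.coe_mul, map_mul, mul_comm s] at hsc
  refine ⟨b, hrs.trans_lt (lt_of_mul_lt_mul_left hsc zero_le), ?_⟩
  have hbu : b • u = φ y :=
    smul_right_injective N hc (by simp only [smul_smul, ← hx, hxy, map_smul])
  rw [← Submodule.Quotient.mk_smul, hbu, Submodule.Quotient.mk_eq_zero]
  exact ⟨y, rfl⟩

lemma adicSeminorm_le_adicSeminorm_map [NoZeroSMulDivisors ↥vK.integer M]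
    {φ : M →ₗ[↥vK.integer] N} (hker : ∀ x ∈ LinearMap.ker φ, adicSeminorm vK M x = 0)
    (hcoker : ∀ z : N ⧸ LinearMap.range φ,
      (∃ a : ↥vK.integer, a ≠ 0 ∧ a • z = 0) → IsAlmostZero vK z)
    (x : M) : adicSeminorm vK M x ≤ adicSeminorm vK N (φ x) := by
  refine le_adicSeminorm fun c v hv => ?_
  rcases eq_or_ne c 0 with rfl | hc
  · exact (hker x (by rw [LinearMap.mem_ker, hv, zero_smul])).trans_le zero_le
  have hvc : 0 < vK ↑c := (Valuation.pos_iff vK).mpr (Subtype.coe_ne_coe.mpr hc)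
  have hz := hcoker (Submodule.Quotient.mk v) ⟨c, hc, by
    rw [← Submodule.Quotient.mk_smul, ← hv, Submodule.Quotient.mk_eq_zero]
    exact ⟨x, rfl⟩⟩
  refine NNReal.le_of_forall_lt_one_mul_le fun r hr => ?_
  obtain ⟨b, hrb, hbv⟩ := hz r hr
  obtain ⟨w, hw⟩ : b • v ∈ LinearMap.range φ := by
    rwa [← Submodule.Quotient.mk_eq_zero, Submodule.Quotient.mk_smul]
  have hker_bc : b • x - c • w ∈ LinearMap.ker φ := by
    rw [LinearMap.mem_ker, map_sub, map_smul, map_smul, hv, hw, smul_comm, sub_self]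
  obtain ⟨k, hk⟩ := exists_eq_smul_of_adicSeminorm_lt_valuation ((hker _ hker_bc).trans_lt hvc)
  calc r * adicSeminorm vK M x ≤ vK ↑b * adicSeminorm vK M x := by gcongr
    _ ≤ adicSeminorm vK M (b • x) := le_adicSeminorm_smul b x
    _ ≤ vK ↑c :=
      adicSeminorm_le_of_eq_smul (y := w + k) (by rw [smul_add, ← hk, add_sub_cancel])

theorem adicSeminorm_map_eq_iff [NoZeroSMulDivisors ↥vK.integer M]
    [NoZeroSMulDivisors ↥vK.integer N] (φ : M →ₗ[↥vK.integer] N) :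
    (∀ x, adicSeminorm vK N (φ x) = adicSeminorm vK M x) ↔
      (∀ x ∈ LinearMap.ker φ, adicSeminorm vK M x = 0) ∧
        ∀ z : N ⧸ LinearMap.range φ,
          (∃ a : ↥vK.integer, a ≠ 0 ∧ a • z = 0) → IsAlmostZero vK z :=
  ⟨fun h => ⟨fun x hx => by rw [← h x, LinearMap.mem_ker.mp hx, adicSeminorm_zero],
      fun _ ⟨_, ha, hz⟩ => isAlmostZero_of_le_adicSeminorm_map (fun x => (h x).ge) ha hz⟩,
    fun ⟨hker, hcoker⟩ x =>
      le_antisymm (adicSeminorm_map_le φ x) (adicSeminorm_le_adicSeminorm_map hker hcoker x)⟩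

end

/-- For `K°`-modules with their adic seminorms: (i) every `K°`-linear map is non-expansive;
(ii) if `M` and `N` are torsion-free then `φ : M → N` is an isometry iff every element of
`ker φ` is divisible and every torsion element of `coker φ` is almost zero (here `π ∈ K°°` is
nonzero if the valuation is nontrivial and `π = 0` if it is trivial). -/
theorem adicSeminorm_nonexpansive_and_isometry_criterion
    {K : Type*} [Field K] (vK : Valuation K ℝ≥0)
    {M N : Type*} [AddCommGroup M] [AddCommGroup N]
    [Module ↥vK.integer M] [Module ↥vK.integer N]
    (π : ↥vK.integer) (hπlt : vK ↑π < 1)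
    (hπtriv : π = 0 ↔ ∀ y : K, y ≠ 0 → vK y = 1)
    (φ : M →ₗ[↥vK.integer] N) :
    -- (i) non-expansive
    (∀ x : M, adicSeminorm vK N (φ x) ≤ adicSeminorm vK M x) ∧
    -- (ii) isometry criterion in the torsion-free case
    (NoZeroSMulDivisors ↥vK.integer M → NoZeroSMulDivisors ↥vK.integer N →
      ((∀ x : M, adicSeminorm vK N (φ x) = adicSeminorm vK M x) ↔
        ((∀ x ∈ LinearMap.ker φ, ∀ n : ℕ, ∃ y : M, x = (π ^ n) • y) ∧
          (∀ z : N ⧸ LinearMap.range φ,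
            (∃ a : ↥vK.integer, a ≠ 0 ∧ a • z = 0) →
            ∀ r : ℝ≥0, r < 1 → ∃ a : ↥vK.integer, r < vK ↑a ∧ a • z = 0)))) := by
  refine ⟨adicSeminorm_map_le φ, fun _ _ => ?_⟩
  rw [adicSeminorm_map_eq_iff]
  simp only [adicSeminorm_eq_zero_iff_forall_eq_pow_smul hπlt hπtriv.mp]
  rfl
end
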